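/- arXiv:1112.1889 — 4 statements merged into one kernel-verified Lean document; each statement's English description precedes it below -/
import Mathlib

section
/- For every integer n ≥ 3, sin(π/n)/(1 - cos(π/n)) < ∑_{j=1}^{n-1} 1/sin(π j/n). -/
/-!
Telescoping with `2 sin(jθ)(1 - cos θ) = (sin(jθ) - sin((j-1)θ)) - (sin((j+1)θ) - sin(jθ))`
shows `sin(π/n) / (1 - cos(π/n)) = ∑_{j=1}^{n-1} sin(π j/n)`. Each `sin(π j/n)` lies in `(0, 1]`,
so it is at most its reciprocal, strictly so for `j = 1` when `n ≥ 3`.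
-/

open Real Finset

section LinearOrderedField

variable {K : Type*} [Field K] [LinearOrder K] [IsStrictOrderedRing K] {a : K}

theorem self_le_one_div_self (h₀ : 0 < a) (h₁ : a ≤ 1) : a ≤ 1 / a := by
  rw [le_div_iff₀ h₀]
  exact mul_le_one₀ h₁ h₀.le h₁

theorem self_lt_one_div_self (h₀ : 0 < a) (h₁ : a < 1) : a < 1 / a := by
  rw [lt_div_iff₀ h₀]
  exact mul_lt_one_of_nonneg_of_lt_one_left h₀.le h₁ h₁.le

end LinearOrderedField

namespace Real

theorem sum_Icc_sin_nat_mul_mul_one_sub_cos (θ : ℝ) (m : ℕ) :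
    ∑ j ∈ Icc 1 m, sin (j * θ) * (1 - cos θ) =
      (sin θ + sin (m * θ) - sin ((m + 1) * θ)) / 2 := by
  induction m with
  | zero => simp
  | succ m ih =>
    rw [sum_Icc_succ_top (by omega), ih]
    have h_next :
        sin ((m + 1 + 1) * θ) = sin ((m + 1) * θ) * cos θ + cos ((m + 1) * θ) * sin θ := by
      rw [← sin_add]; ring_nf
    have h_prev : sin (m * θ) = sin ((m + 1) * θ) * cos θ - cos ((m + 1) * θ) * sin θ := by
      rw [← sin_sub]; ring_nf
    push_cast
    rw [h_next, h_prev]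
    ring

theorem sum_Icc_sin_pi_mul_div_mul_one_sub_cos (n : ℕ) :
    (∑ j ∈ Icc 1 (n - 1), sin (π * j / n)) * (1 - cos (π / n)) = sin (π / n) := by
  rcases Nat.eq_zero_or_pos n with rfl | hn
  · simp
  have h_arg : ∀ j : ℕ, π * j / n = j * (π / n) := fun j => by ring
  have h_cast : ((n - 1 : ℕ) : ℝ) = n - 1 := by push_cast [Nat.one_le_iff_ne_zero.2 hn.ne']; rfl
  have h_top : ((n : ℝ) - 1 + 1) * (π / n) = π := by field_simp; ring
  have h_pred : ((n : ℝ) - 1) * (π / n) = π - π / n := by field_simp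
  simp only [h_arg, sum_mul, sum_Icc_sin_nat_mul_mul_one_sub_cos, h_cast, h_top, h_pred,
    sin_pi, sin_pi_sub]
  ring

theorem sin_pi_mul_nat_div_pos {j n : ℕ} (hj : 0 < j) (hjn : j < n) : 0 < sin (π * j / n) := by
  have hj₀ : (0 : ℝ) < j := by exact_mod_cast hj
  have hjn' : (j : ℝ) < n := by exact_mod_cast hjn
  have hn₀ : (0 : ℝ) < n := hj₀.trans hjn'
  apply sin_pos_of_pos_of_lt_pi (by positivity)
  rw [div_lt_iff₀ hn₀]
  nlinarith [pi_pos]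

end Real

theorem sin_div_one_sub_cos_lt_sum_inv_sin (n : ℕ) (hn : 3 ≤ n) :
    Real.sin (π / n) / (1 - Real.cos (π / n)) <
      ∑ j ∈ Finset.Icc 1 (n - 1), 1 / Real.sin (π * j / n) := by
  have hn₀ : (0 : ℝ) < n := by positivity
  have hn₃ : (3 : ℝ) ≤ n := by exact_mod_cast hn
  have h_sin_pos : ∀ j ∈ Icc 1 (n - 1), 0 < sin (π * j / n) := fun j hj =>
    sin_pi_mul_nat_div_pos (mem_Icc.1 hj).1 (by grind)
  have h_one_mem : 1 ∈ Icc 1 (n - 1) := mem_Icc.2 ⟨le_rfl, by omega⟩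
  have h_first : sin (π * (1 : ℕ) / n) = sin (π / n) := by rw [Nat.cast_one, mul_one]
  have h_sin_first_pos : 0 < sin (π / n) := h_first ▸ h_sin_pos 1 h_one_mem
  have h_sin_first_lt_one : sin (π / n) < 1 := by
    rw [← sin_pi_div_two]
    refine sin_lt_sin_of_lt_of_le_pi_div_two (by linarith [pi_pos, div_pos pi_pos hn₀]) le_rfl ?_
    rw [div_lt_div_iff₀ hn₀ two_pos]
    nlinarith [pi_pos]
  have h_identity := sum_Icc_sin_pi_mul_div_mul_one_sub_cos n
  have h_ne : 1 - cos (π / n) ≠ 0 :=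
    right_ne_zero_of_mul (h_identity.symm ▸ h_sin_first_pos.ne')
  calc sin (π / n) / (1 - cos (π / n)) = ∑ j ∈ Icc 1 (n - 1), sin (π * j / n) :=
        (eq_div_of_mul_eq h_ne h_identity).symm
    _ < ∑ j ∈ Icc 1 (n - 1), 1 / sin (π * j / n) :=
        sum_lt_sum (fun j hj => self_le_one_div_self (h_sin_pos j hj) (sin_le_one _))
          ⟨1, h_one_mem, h_first ▸ self_lt_one_div_self h_sin_first_pos h_sin_first_lt_one⟩
end

section
/- For every integer n ≥ 3, the quantity λ = 2 - (2 sin(π/n)/(1 - cos(π/n))) · (∑_{j=1}^{n-1} 1/sin(π j/n))⁻¹ satisfies 0 < λ < 2. -/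
open Real Finset

theorem lambda_mem_Ioo (n : ℕ) (hn : 3 ≤ n) :
    let lam : ℝ := 2 - (2 * Real.sin (π / n) / (1 - Real.cos (π / n))) *
      (∑ j ∈ Finset.Icc 1 (n - 1), 1 / Real.sin (π * j / n))⁻¹
    0 < lam ∧ lam < 2 := by
  intro lam
  have hn0 : (0:ℝ) < n := by
    have : (3:ℝ) ≤ n := by exact_mod_cast hn
    linarith
  have hx0 : 0 < π / n := div_pos pi_pos hn0
  have hxlt : π / n < π := by
    rw [div_lt_iff₀ hn0]
    nlinarith [pi_pos, show (3:ℝ) ≤ n from by exact_mod_cast hn]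
  have hsin : 0 < Real.sin (π / n) := Real.sin_pos_of_pos_of_lt_pi hx0 hxlt
  have hcos : Real.cos (π / n) < 1 := by
    nlinarith [Real.sin_sq_add_cos_sq (π / n), Real.cos_le_one (π / n)]
  have hterm : ∀ j ∈ Finset.Icc 1 (n - 1), 0 < Real.sin (π * j / n) := by
    intro j hj
    simp only [Finset.mem_Icc] at hj
    have hj1 : (1:ℝ) ≤ j := by exact_mod_cast hj.1
    have hj2 : (j:ℝ) < n := by
      have : j < n := lt_of_le_of_lt hj.2 (Nat.sub_lt (by omega) one_pos)
      exact_mod_cast this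
    apply Real.sin_pos_of_pos_of_lt_pi
    · positivity
    · rw [div_lt_iff₀ hn0]
      nlinarith [pi_pos]
  have hSpos : 0 < ∑ j ∈ Finset.Icc 1 (n - 1), 1 / Real.sin (π * j / n) := by
    apply Finset.sum_pos
    · intro j hj
      exact div_pos one_pos (hterm j hj)
    · exact Finset.nonempty_Icc.mpr (by omega)
  set S := ∑ j ∈ Finset.Icc 1 (n - 1), 1 / Real.sin (π * j / n) with hSdef
  have hsub : ({1, n-1} : Finset ℕ) ⊆ Finset.Icc 1 (n - 1) := by
    intro j hj
    simp only [Finset.mem_insert, Finset.mem_singleton] at hj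
    simp only [Finset.mem_Icc]
    omega
  have hne : (1:ℕ) ≠ n - 1 := by omega
  have heq : Real.sin (π * ↑(n-1) / n) = Real.sin (π / n) := by
    have h1 : ((n-1 : ℕ) : ℝ) = (n:ℝ) - 1 := by
      push_cast [Nat.cast_sub (by omega : 1 ≤ n)]; ring
    have h2 : π * ((n:ℝ) - 1) / n = π - π / n := by
      field_simp
    rw [h1, h2, Real.sin_pi_sub]
  have hpair : 2 / Real.sin (π / n) ≤ S := by
    have := Finset.sum_le_sum_of_subset_of_nonneg hsub
      (fun j hj _ => le_of_lt (div_pos one_pos (hterm j hj)))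
    rw [Finset.sum_pair hne] at this
    have h1 : π * (1:ℕ) / n = π / n := by push_cast; ring
    rw [h1, heq] at this
    calc 2 / Real.sin (π / n) = 1 / Real.sin (π / n) + 1 / Real.sin (π / n) := by ring
    _ ≤ S := this
  have hkey : Real.sin (π / n) / (1 - Real.cos (π / n)) < S := by
    have h2 : Real.sin (π / n) / (1 - Real.cos (π / n)) < 2 / Real.sin (π / n) := by
      rw [div_lt_div_iff₀ (by linarith) hsin]
      nlinarith [Real.sin_sq_add_cos_sq (π / n)]
    linarith
  constructor
  · have : (2 * Real.sin (π / n) / (1 - Real.cos (π / n))) * S⁻¹ < 2 := by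
      rw [mul_inv_lt_iff₀ hSpos]
      have : 2 * Real.sin (π / n) / (1 - Real.cos (π / n))
          = 2 * (Real.sin (π / n) / (1 - Real.cos (π / n))) := by ring
      rw [this]
      nlinarith
    simp only [lam]
    linarith
  · have : 0 < (2 * Real.sin (π / n) / (1 - Real.cos (π / n))) * S⁻¹ := by
      apply mul_pos
      · apply div_pos (by linarith) (by linarith)
      · exact inv_pos.mpr hSpos
    simp only [lam]
    linarith
end

section
/- For C ∈ ℂ with C ∉ {0, ±1, ±√2}, the functions X₁(t) = t - C² and X₂(t) = √((t-1)(tC² - 2t + C²)) are two linearly independent solutions of the differential equation t(-C² + 2t + (C²-2)t²)·X'' - (t - C²)·X' = -X (i.e., the case λ = -1). -/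
/-!
If `y² = P` then differentiating twice gives `P'² - 2 P P'' = -4 y³ y''`. For the quadratic
`P t = (t - 1)(t C² - 2t + C²)` the left side is the constant discriminant `4 (C² - 1)²`, which is
nonzero for `C ≠ ±1`. Hence `y` and `y''` never vanish: the first makes the equation for `y`
(multiplied by `4 y³`) a polynomial identity, the second rules out a linear relation with the
affine solution `t - C²`, whose second derivative vanishes.
-/

open Set

section Derivatives

variable {𝕜 : Type*} [NontriviallyNormedField 𝕜] {s : Set 𝕜} {f g y P P' P'' : 𝕜 → 𝕜}
  {t : 𝕜} {f' g' : 𝕜}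

theorem HasDerivAt.eq_of_eqOn (hf : HasDerivAt f f' t) (hg : HasDerivAt g g' t)
    (hfg : EqOn f g s) (hs : IsOpen s) (ht : t ∈ s) : f' = g' :=
  hf.unique (hg.congr_of_eventuallyEq (hfg.eventuallyEq_of_mem (hs.mem_nhds ht)))

theorem two_mul_mul_deriv_of_sq_eqOn (hs : IsOpen s) (hy : DifferentiableOn 𝕜 y s)
    (hyP : EqOn (fun t => y t ^ 2) P s) (hP : ∀ t ∈ s, HasDerivAt P (P' t) t) :
    EqOn (fun t => 2 * y t * deriv y t) P' s := by
  intro t ht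
  have hy2 : HasDerivAt (fun t => y t ^ 2) (2 * y t * deriv y t) t :=
    ((hy.differentiableAt (hs.mem_nhds ht)).hasDerivAt.fun_pow 2).congr_deriv (by ring)
  exact hy2.eq_of_eqOn (hP t ht) hyP hs ht

theorem deriv_sq_sub_two_mul_mul_of_sq_eqOn (hs : IsOpen s) (hy : DifferentiableOn 𝕜 y s)
    (hy' : DifferentiableOn 𝕜 (deriv y) s) (hyP : EqOn (fun t => y t ^ 2) P s)
    (hP : ∀ t ∈ s, HasDerivAt P (P' t) t) (hP' : ∀ t ∈ s, HasDerivAt P' (P'' t) t)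
    (ht : t ∈ s) : P' t ^ 2 - 2 * P t * P'' t = -4 * y t ^ 3 * deriv (deriv y) t := by
  have h1 := two_mul_mul_deriv_of_sq_eqOn hs hy hyP hP
  have h2 : HasDerivAt (fun t => 2 * y t * deriv y t)
      (2 * deriv y t * deriv y t + 2 * y t * deriv (deriv y) t) t :=
    ((hy.differentiableAt (hs.mem_nhds ht)).hasDerivAt.const_mul 2).mul
      (hy'.differentiableAt (hs.mem_nhds ht)).hasDerivAt
  have h2' := h2.eq_of_eqOn (hP' t ht) h1 hs ht
  rw [← h1 ht, ← hyP ht, ← h2']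
  ring

theorem eq_zero_of_linear_add_eqOn_zero {c a b : 𝕜} (hs : IsOpen s) (ht : t ∈ s)
    (hy : DifferentiableOn 𝕜 y s) (hy' : DifferentiableOn 𝕜 (deriv y) s)
    (hy'' : deriv (deriv y) t ≠ 0) (h : ∀ t ∈ s, a * (t - c) + b * y t = 0) :
    a = 0 ∧ b = 0 := by
  have h1 : ∀ t ∈ s, a + b * deriv y t = 0 := fun t ht => by
    simpa using (((hasDerivAt_id t).sub_const c).const_mul a |>.add
      ((hy.differentiableAt (hs.mem_nhds ht)).hasDerivAt.const_mul b)).eq_of_eqOn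
      (hasDerivAt_const t 0) h hs ht
  have h2 : b * deriv (deriv y) t = 0 :=
    ((hy'.differentiableAt (hs.mem_nhds ht)).hasDerivAt.const_mul b |>.const_add a).eq_of_eqOn
      (hasDerivAt_const t 0) h1 hs ht
  have hb : b = 0 := (mul_eq_zero.1 h2).resolve_right hy''
  exact ⟨by simpa [hb] using h1 t ht, hb⟩

end Derivatives

section Conic

variable (C : ℂ)

theorem hasDerivAt_conic (t : ℂ) :
    HasDerivAt (fun t => (t - 1) * (t * C ^ 2 - 2 * t + C ^ 2)) (2 * (C ^ 2 - 2) * t + 2) t := by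
  refine (((hasDerivAt_id' t).sub_const 1).fun_mul ((((hasDerivAt_id' t).mul_const (C ^ 2)).fun_sub
    ((hasDerivAt_id' t).const_mul 2)).add_const (C ^ 2))).congr_deriv ?_
  ring

theorem hasDerivAt_deriv_conic (t : ℂ) :
    HasDerivAt (fun t => 2 * (C ^ 2 - 2) * t + 2) (2 * (C ^ 2 - 2)) t := by
  simpa using ((hasDerivAt_id t).const_mul (2 * (C ^ 2 - 2))).add_const 2

theorem conic_discriminant (t : ℂ) :
    (2 * (C ^ 2 - 2) * t + 2) ^ 2 - 2 * ((t - 1) * (t * C ^ 2 - 2 * t + C ^ 2)) * (2 * (C ^ 2 - 2))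
      = 4 * (C ^ 2 - 1) ^ 2 := by
  ring

theorem conic_ode_of_sq_eq {t y y' y'' : ℂ} (hy : y ≠ 0)
    (h0 : y ^ 2 = (t - 1) * (t * C ^ 2 - 2 * t + C ^ 2))
    (h1 : 2 * y * y' = 2 * (C ^ 2 - 2) * t + 2)
    (h2 : 4 * (C ^ 2 - 1) ^ 2 = -4 * y ^ 3 * y'') :
    t * (-C ^ 2 + 2 * t + (C ^ 2 - 2) * t ^ 2) * y'' - (t - C ^ 2) * y' = -y := by
  refine mul_left_cancel₀ (pow_ne_zero 3 hy) ?_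
  linear_combination (t * (-C ^ 2 + 2 * t + (C ^ 2 - 2) * t ^ 2) / 4) * h2
    - (t - C ^ 2) * y ^ 2 / 2 * h1
    + (y ^ 2 + (t - 1) * (t * C ^ 2 - 2 * t + C ^ 2)
      - (t - C ^ 2) * (2 * (C ^ 2 - 2) * t + 2) / 2) * h0

end Conic

theorem lambda_neg_one_solutions_general (C : ℂ) (hC1 : C ≠ 1) (hC1' : C ≠ -1)
    (s : Set ℂ) (hs : IsOpen s) (hsne : s.Nonempty)
    (X₂ : ℂ → ℂ) (hX₂d : DifferentiableOn ℂ X₂ s)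
    (hX₂ : ∀ t ∈ s, (X₂ t) ^ 2 = (t - 1) * (t * C ^ 2 - 2 * t + C ^ 2)) :
    let X₁ : ℂ → ℂ := fun t => t - C ^ 2
    (∀ t ∈ s, t * (-C ^ 2 + 2 * t + (C ^ 2 - 2) * t ^ 2) * deriv (deriv X₁) t
        - (t - C ^ 2) * deriv X₁ t = -(X₁ t)) ∧
    (∀ t ∈ s, t * (-C ^ 2 + 2 * t + (C ^ 2 - 2) * t ^ 2) * deriv (deriv X₂) t
        - (t - C ^ 2) * deriv X₂ t = -(X₂ t)) ∧
    (∀ a b : ℂ, (∀ t ∈ s, a * X₁ t + b * X₂ t = 0) → a = 0 ∧ b = 0) := by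
  intro X₁
  have hX₂d' := hX₂d.deriv hs
  have h1 : ∀ t ∈ s, 2 * X₂ t * deriv X₂ t = 2 * (C ^ 2 - 2) * t + 2 :=
    two_mul_mul_deriv_of_sq_eqOn hs hX₂d hX₂ fun t _ => hasDerivAt_conic C t
  have hdisc : ∀ t ∈ s, 4 * (C ^ 2 - 1) ^ 2 = -4 * X₂ t ^ 3 * deriv (deriv X₂) t := by
    intro t ht
    have h := deriv_sq_sub_two_mul_mul_of_sq_eqOn (P'' := fun _ => 2 * (C ^ 2 - 2)) hs hX₂d
      hX₂d' hX₂ (fun t _ => hasDerivAt_conic C t) (fun t _ => hasDerivAt_deriv_conic C t) ht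
    rwa [conic_discriminant] at h
  have hC : (C ^ 2 - 1) ^ 2 ≠ 0 := pow_ne_zero 2 (sub_ne_zero.2 (sq_ne_one_iff.2 ⟨hC1, hC1'⟩))
  have hprod : ∀ t ∈ s, X₂ t ^ 3 * deriv (deriv X₂) t ≠ 0 := fun t ht h =>
    hC (by linear_combination hdisc t ht / 4 - h)
  refine ⟨fun t _ => by simp [X₁], fun t ht => ?_, fun a b hab => ?_⟩
  · exact conic_ode_of_sq_eq C (fun h => hprod t ht (by simp [h])) (hX₂ t ht) (h1 t ht)
      (hdisc t ht)
  · obtain ⟨t₀, ht₀⟩ := hsne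
    exact eq_zero_of_linear_add_eqOn_zero hs ht₀ hX₂d hX₂d'
      (right_ne_zero_of_mul (hprod t₀ ht₀)) hab

/-- For `C ∉ {0, ±1, ±√2}`, `X₁ t = t - C²` and `X₂ t = √((t-1)(tC² - 2t + C²))`
(the latter given as any differentiable branch of the square root on an open set `s`)
are two linearly independent solutions of
`t(-C² + 2t + (C²-2)t²)·X'' - (t - C²)·X' = -X`. -/
theorem lambda_neg_one_solutions (C : ℂ) (hC0 : C ≠ 0) (hC1 : C ≠ 1) (hC1' : C ≠ -1)
    (hC2 : C ^ 2 ≠ 2) (s : Set ℂ) (hs : IsOpen s) (hsne : s.Nonempty)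
    (X₂ : ℂ → ℂ) (hX₂d : DifferentiableOn ℂ X₂ s)
    (hX₂ : ∀ t ∈ s, (X₂ t) ^ 2 = (t - 1) * (t * C ^ 2 - 2 * t + C ^ 2)) :
    let X₁ : ℂ → ℂ := fun t => t - C ^ 2
    (∀ t ∈ s, t * (-C ^ 2 + 2 * t + (C ^ 2 - 2) * t ^ 2) * deriv (deriv X₁) t
        - (t - C ^ 2) * deriv X₁ t = -(X₁ t)) ∧
    (∀ t ∈ s, t * (-C ^ 2 + 2 * t + (C ^ 2 - 2) * t ^ 2) * deriv (deriv X₂) t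
        - (t - C ^ 2) * deriv X₂ t = -(X₂ t)) ∧
    (∀ a b : ℂ, (∀ t ∈ s, a * X₁ t + b * X₂ t = 0) → a = 0 ∧ b = 0) :=
  lambda_neg_one_solutions_general C hC1 hC1' s hs hsne X₂ hX₂d hX₂
end

section
/- For real positive m₁, m₂, m₃ with m₁ + m₂ + m₃ = 1, the quadratic form Q(m₁,m₂,m₃) = 7m₂² - 35m₁m₂ - 35m₂m₃ + 56m₁² + 63m₁m₃ + 56m₃² vanishes if and only if (m₁, m₂, m₃) = (1/7, 5/7, 1/7). -/
theorem resultant_form_vanishes_iff (m₁ m₂ m₃ : ℝ)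
    (h₁ : 0 < m₁) (h₂ : 0 < m₂) (h₃ : 0 < m₃) (hsum : m₁ + m₂ + m₃ = 1) :
    7 * m₂ ^ 2 - 35 * m₁ * m₂ - 35 * m₂ * m₃ + 56 * m₁ ^ 2 + 63 * m₁ * m₃
        + 56 * m₃ ^ 2 = 0 ↔
      m₁ = 1 / 7 ∧ m₂ = 5 / 7 ∧ m₃ = 1 / 7 := by
  constructor
  · intro h
    have hm2 : m₂ = 1 - m₁ - m₃ := by linarith
    subst hm2
    have key : (343/4) * (m₁ + m₃ - 2/7)^2 + (49/4) * (m₁ - m₃)^2 = 0 := by ring_nf; nlinarith [h]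
    have hs1 : (m₁ + m₃ - 2/7)^2 = 0 := by nlinarith [sq_nonneg (m₁ + m₃ - 2/7), sq_nonneg (m₁ - m₃)]
    have hs2 : (m₁ - m₃)^2 = 0 := by nlinarith [sq_nonneg (m₁ + m₃ - 2/7), sq_nonneg (m₁ - m₃)]
    have e1 : m₁ + m₃ - 2/7 = 0 := by
      have := pow_eq_zero_iff (n := 2) (by norm_num) |>.mp hs1; linarith
    have e2 : m₁ - m₃ = 0 := by
      have := pow_eq_zero_iff (n := 2) (by norm_num) |>.mp hs2; linarith
    refine ⟨by linarith, by linarith, by linarith⟩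
  · rintro ⟨h1, h2, h3⟩
    subst h1; subst h2; subst h3; norm_num
end
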